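/- arXiv:1306.2373 — 5 statements merged into one kernel-verified Lean document; each statement's English description precedes it below -/
import Mathlib

section
/- Let ε₁, δ₁, ε₂, δ₂ ∈ {−1, +1}, let p* ∈ (0,1), and let A₁ be a 2×2 real matrix with entries a₁, b₁, c₁, d₁ (read row-wise) such that sign(a₁ − c₁) = ε₁ and sign(b₁ − d₁) = δ₁. Then there exist infinitely many 2×2 real matrices A₂ with entries a₂, b₂, c₂, d₂ satisfying sign(a₂ − c₂) = ε₂ and sign(b₂ − d₂) = δ₂ such that the matrix A(p) = p·A₁ + (1−p)·A₂ with entries a(p), b(p), c(p), d(p) satisfies sign(a(p) − c(p)) = ε₂ and sign(b(p) − d(p)) = δ₂ for all p ∈ (0, p*), and sign(a(p) − c(p)) = ε₁ and sign(b(p) − d(p)) = δ₁ for all p ∈ (p*, 1). -/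
/-!
Each column gap `A 0 j - A 1 j` of `A(p)` is the mixture `p g₁ + (1 - p) g₂` of the gaps of
`A₁` and `A₂`. If the target sign of a gap agrees with that of `A₁`, take `g₂ = g₁`; otherwise
take `g₂ = -(p*/(1-p*)) g₁`, for which the mixture is `(p - p*)/(1 - p*) · g₁` and changes sign
exactly at `p*`. Since only the gaps matter, shifting a column of `A₂` gives infinitely many `A₂`.
-/

open Set

lemma Real.sign_mul (x y : ℝ) : Real.sign (x * y) = Real.sign x * Real.sign y := by
  rcases lt_trichotomy x 0 with hx | hx | hx <;> rcases lt_trichotomy y 0 with hy | hy | hy <;>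
    simp [Real.sign_of_neg, Real.sign_of_pos, Real.sign_zero, hx, hy, mul_pos_of_neg_of_neg,
      mul_neg_of_pos_of_neg, mul_neg_of_neg_of_pos]

lemma exists_sign_switch_at {x₁ pstar ε : ℝ} (hp0 : 0 < pstar) (hp1 : pstar < 1)
    (hε : ε = Real.sign x₁ ∨ ε = -Real.sign x₁) :
    ∃ x₂ : ℝ, Real.sign x₂ = ε ∧
      (∀ p ∈ Ioo 0 pstar, Real.sign (p * x₁ + (1 - p) * x₂) = ε) ∧
      (∀ p ∈ Ioo pstar 1, Real.sign (p * x₁ + (1 - p) * x₂) = Real.sign x₁) := by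
  rcases hε with rfl | rfl
  · exact ⟨x₁, rfl, fun p _ => by ring_nf, fun p _ => by ring_nf⟩
  · have hq : 0 < 1 - pstar := by linarith
    have hmix : ∀ p : ℝ, p * x₁ + (1 - p) * (-(pstar / (1 - pstar)) * x₁)
        = (p - pstar) / (1 - pstar) * x₁ := fun p => by field_simp; ring
    refine ⟨-(pstar / (1 - pstar)) * x₁, ?_, fun p hp => ?_, fun p hp => ?_⟩
    · rw [Real.sign_mul, Real.sign_neg, Real.sign_of_pos (div_pos hp0 hq)]
      ring
    · rw [hmix, Real.sign_mul, Real.sign_of_neg (div_neg_of_neg_of_pos (by linarith [hp.2]) hq)]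
      ring
    · rw [hmix, Real.sign_mul, Real.sign_of_pos (div_pos (by linarith [hp.1]) hq), one_mul]

lemma Matrix.smul_add_smul_apply_sub {m n : Type*} (A B : Matrix m n ℝ) (p q : ℝ)
    (i i' : m) (j : n) :
    (p • A + q • B) i j - (p • A + q • B) i' j = p * (A i j - A i' j) + q * (B i j - B i' j) := by
  simp only [Matrix.add_apply, Matrix.smul_apply, smul_eq_mul]
  ring

lemma eq_or_eq_neg_of_unit_signs {ε ε' : ℝ} (hε : ε = -1 ∨ ε = 1) (hε' : ε' = -1 ∨ ε' = 1) :
    ε' = ε ∨ ε' = -ε := by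
  rcases hε with rfl | rfl <;> rcases hε' with rfl | rfl <;> norm_num

/-- For any target sign patterns `ε₁,δ₁,ε₂,δ₂ ∈ {−1,1}`, `p* ∈ (0,1)`,
and a 2×2 matrix `A₁` with `sign(a₁−c₁)=ε₁`, `sign(b₁−d₁)=δ₁`, there are infinitely
many 2×2 matrices `A₂` with sign pattern `(ε₂,δ₂)` such that `A(p) = p·A₁+(1−p)·A₂`
has sign pattern `(ε₂,δ₂)` for all `p ∈ (0,p*)` and `(ε₁,δ₁)` for all `p ∈ (p*,1)`. -/
theorem stmt_2 (ε₁ δ₁ ε₂ δ₂ : ℝ)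
    (hε₁ : ε₁ = -1 ∨ ε₁ = 1) (hδ₁ : δ₁ = -1 ∨ δ₁ = 1)
    (hε₂ : ε₂ = -1 ∨ ε₂ = 1) (hδ₂ : δ₂ = -1 ∨ δ₂ = 1)
    (pstar : ℝ) (hpstar : pstar ∈ Set.Ioo (0:ℝ) 1)
    (A₁ : Matrix (Fin 2) (Fin 2) ℝ)
    (hA₁ac : Real.sign (A₁ 0 0 - A₁ 1 0) = ε₁)
    (hA₁bd : Real.sign (A₁ 0 1 - A₁ 1 1) = δ₁) :
    {A₂ : Matrix (Fin 2) (Fin 2) ℝ |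
      Real.sign (A₂ 0 0 - A₂ 1 0) = ε₂ ∧
      Real.sign (A₂ 0 1 - A₂ 1 1) = δ₂ ∧
      (∀ p ∈ Set.Ioo (0:ℝ) pstar,
        Real.sign ((p • A₁ + (1 - p) • A₂) 0 0 - (p • A₁ + (1 - p) • A₂) 1 0) = ε₂ ∧
        Real.sign ((p • A₁ + (1 - p) • A₂) 0 1 - (p • A₁ + (1 - p) • A₂) 1 1) = δ₂) ∧
      (∀ p ∈ Set.Ioo pstar (1:ℝ),
        Real.sign ((p • A₁ + (1 - p) • A₂) 0 0 - (p • A₁ + (1 - p) • A₂) 1 0) = ε₁ ∧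
        Real.sign ((p • A₁ + (1 - p) • A₂) 0 1 - (p • A₁ + (1 - p) • A₂) 1 1) = δ₁)}.Infinite := by
  obtain ⟨hp0, hp1⟩ := hpstar
  subst hA₁ac hA₁bd
  obtain ⟨x₂, hx₂, hx₂lo, hx₂hi⟩ :=
    exists_sign_switch_at hp0 hp1 (eq_or_eq_neg_of_unit_signs hε₁ hε₂)
  obtain ⟨y₂, hy₂, hy₂lo, hy₂hi⟩ :=
    exists_sign_switch_at hp0 hp1 (eq_or_eq_neg_of_unit_signs hδ₁ hδ₂)
  refine Set.infinite_of_injective_forall_mem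
    (f := fun t : ℝ => Matrix.of ![![x₂ + t, y₂], ![t, 0]]) (fun s t hst => ?_) (fun t => ?_)
  · simpa using congrFun (congrFun hst 1) 0
  · simp only [mem_ofPred_eq, Matrix.smul_add_smul_apply_sub]
    simp only [Matrix.of_apply, Matrix.cons_val_zero, Matrix.cons_val_one, add_sub_cancel_right,
      sub_zero]
    exact ⟨hx₂, hy₂, fun p hp => ⟨hx₂lo p hp, hy₂lo p hp⟩, fun p hp => ⟨hx₂hi p hp, hy₂hi p hp⟩⟩
end

section
/- Let a, b, c, d ∈ ℝ with a < c and d < b (Hawk-Dove class), and let x̂ = (d − b)/((d − b) + (a − c)). Then the replicator vector field g(x) = x·(1 − x)·((a − c)·x + (b − d)·(1 − x)) satisfies g(x) > 0 for all x ∈ (0, x̂) and g(x) < 0 for all x ∈ (x̂, 1), so the interior rest point x̂ is attracting from both sides. -/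
/-!
The payoff gap `(a - c) x + (b - d) (1 - x)` is affine in `x` and factors as `S (x - x̂)` with
`S = (d - b) + (a - c) < 0`, so it changes sign from positive to negative at `x̂`; in the
Hawk-Dove class `x̂` lies in `(0, 1)`, where the factor `x (1 - x)` of the replicator field
is positive.
-/

lemma payoff_gap_eq_mul_sub_div {K : Type*} [Field K] {a b c d : K} (x : K)
    (hS : (d - b) + (a - c) ≠ 0) :
    (a - c) * x + (b - d) * (1 - x) =
      ((d - b) + (a - c)) * (x - (d - b) / ((d - b) + (a - c))) := by
  field_simp
  ring

lemma hawkDove_restPoint_mem_Ioo {a b c d : ℝ} (hac : a < c) (hdb : d < b) :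
    (d - b) / ((d - b) + (a - c)) ∈ Set.Ioo 0 1 :=
  ⟨div_pos_of_neg_of_neg (by linarith) (by linarith),
    (div_lt_one_of_neg (by linarith)).2 (by linarith)⟩

lemma mul_one_sub_pos_of_mem_Ioo {x : ℝ} (hx : x ∈ Set.Ioo 0 1) : 0 < x * (1 - x) :=
  mul_pos hx.1 (sub_pos.2 hx.2)

/-- In the Hawk-Dove class (`a < c`, `d < b`), the replicator vector
field `g(x) = x(1−x)((a−c)x + (b−d)(1−x))` is positive on `(0, x̂)` and negative on
`(x̂, 1)`, where `x̂ = (d−b)/((d−b)+(a−c))`; so `x̂` is attracting from both sides. -/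
theorem stmt_5 (a b c d : ℝ) (hac : a < c) (hdb : d < b) :
    (∀ x ∈ Set.Ioo (0:ℝ) ((d - b) / ((d - b) + (a - c))),
      x * (1 - x) * ((a - c) * x + (b - d) * (1 - x)) > 0) ∧
    (∀ x ∈ Set.Ioo ((d - b) / ((d - b) + (a - c))) (1:ℝ),
      x * (1 - x) * ((a - c) * x + (b - d) * (1 - x)) < 0) := by
  have hS : (d - b) + (a - c) < 0 := by linarith
  obtain ⟨hr_pos, hr_lt_one⟩ := hawkDove_restPoint_mem_Ioo hac hdb
  refine ⟨fun x ⟨hx_pos, hx_lt⟩ => ?_, fun x ⟨hx_gt, hx_lt_one⟩ => ?_⟩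
  · rw [payoff_gap_eq_mul_sub_div x hS.ne]
    exact mul_pos (mul_one_sub_pos_of_mem_Ioo ⟨hx_pos, hx_lt.trans hr_lt_one⟩)
      (mul_pos_of_neg_of_neg hS (sub_neg.2 hx_lt))
  · rw [payoff_gap_eq_mul_sub_div x hS.ne]
    exact mul_neg_of_pos_of_neg (mul_one_sub_pos_of_mem_Ioo ⟨hr_pos.trans hx_gt, hx_lt_one⟩)
      (mul_neg_of_neg_of_pos hS (sub_pos.2 hx_gt))
end

section
/- Let a₁, b₁, a₂, b₂ ∈ ℝ with a₁ = b₁ and a₂ > b₂, let p ∈ (0,1), and let A' = p·A_{a₁,b₁} + (1−p)·A_{a₂,b₂}, where A_{a,b} denotes the 3×3 matrix with rows (0, a, −b), (−b, 0, a), (a, −b, 0). Then A' = A_{a',b'} with a' = p·a₁ + (1−p)·a₂ and b' = p·b₁ + (1−p)·b₂, we have a' > b', and the barycenter x̂ = (1/3,1/3,1/3) satisfies x̂·A'x > x·A'x for all x in the simplex Δ = {x ∈ ℝ³ : xᵢ ≥ 0, Σxᵢ = 1} with x ≠ x̂. Thus stochastic switching between a neutral-cycling RSP landscape and a stabilizing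 one yields a landscape with the barycenter as an ESS for every switching probability p ∈ (0,1). -/
open Matrix

lemma rsp_ess_aux (A B : ℝ) (hAB : A > B) (x : Fin 3 → ℝ)
    (hsum : x 0 + x 1 + x 2 = 1)
    (hsq : (x 0 - 1/3)^2 + (x 1 - 1/3)^2 + (x 2 - 1/3)^2 > 0) :
    (fun _ : Fin 3 => (1:ℝ)/3) ⬝ᵥ (!![0, A, -B; -B, 0, A; A, -B, 0]).mulVec x
      > x ⬝ᵥ (!![0, A, -B; -B, 0, A; A, -B, 0]).mulVec x := by
  simp [dotProduct, Matrix.mulVec, Fin.sum_univ_three, Matrix.cons_val_zero,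
    Matrix.cons_val_one, Matrix.head_cons, Matrix.cons_val_succ]
  have key : 3⁻¹ * (A * x 1 + -(B * x 2)) + 3⁻¹ * (-(B * x 0) + A * x 2)
        + 3⁻¹ * (A * x 0 + -(B * x 1))
      - (x 0 * (A * x 1 + -(B * x 2)) + x 1 * (-(B * x 0) + A * x 2)
        + x 2 * (A * x 0 + -(B * x 1)))
      = (A - B)/2 * ((x 0 - 1/3)^2 + (x 1 - 1/3)^2 + (x 2 - 1/3)^2) := by
    linear_combination (-(A - B) * (3*(x 0 + x 1 + x 2) - 1)/6) * hsum
  linarith [mul_pos (show (0:ℝ) < (A - B)/2 by linarith) hsq]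

/-- With `a₁ = b₁`, `a₂ > b₂`, `p ∈ (0,1)`, and RSP matrices
`A_{a,b} = !![0,a,−b; −b,0,a; a,−b,0]`, the mean matrix
`A' = p·A_{a₁,b₁} + (1−p)·A_{a₂,b₂}` equals `A_{a',b'}` with
`a' = p·a₁+(1−p)·a₂ > b' = p·b₁+(1−p)·b₂`, and the barycenter is an ESS of `A'`:
`x̂·A'x > x·A'x` for all `x` in the simplex with `x ≠ x̂`. -/
theorem stmt_7 (a₁ b₁ a₂ b₂ p : ℝ) (h₁ : a₁ = b₁) (h₂ : a₂ > b₂)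
    (hp : p ∈ Set.Ioo (0:ℝ) 1)
    (A' : Matrix (Fin 3) (Fin 3) ℝ)
    (hA' : A' = p • !![0, a₁, -b₁; -b₁, 0, a₁; a₁, -b₁, 0]
        + (1 - p) • !![0, a₂, -b₂; -b₂, 0, a₂; a₂, -b₂, 0]) :
    (A' = !![0, p * a₁ + (1 - p) * a₂, -(p * b₁ + (1 - p) * b₂);
             -(p * b₁ + (1 - p) * b₂), 0, p * a₁ + (1 - p) * a₂;
             p * a₁ + (1 - p) * a₂, -(p * b₁ + (1 - p) * b₂), 0]) ∧
    p * a₁ + (1 - p) * a₂ > p * b₁ + (1 - p) * b₂ ∧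
    (∀ x : Fin 3 → ℝ, (∀ i, 0 ≤ x i) → (∑ i, x i) = 1 → x ≠ (fun _ => (1:ℝ)/3) →
      (fun _ : Fin 3 => (1:ℝ)/3) ⬝ᵥ A'.mulVec x > x ⬝ᵥ A'.mulVec x) := by
  obtain ⟨hp0, hp1⟩ := hp
  have heq : A' = !![0, p * a₁ + (1 - p) * a₂, -(p * b₁ + (1 - p) * b₂);
             -(p * b₁ + (1 - p) * b₂), 0, p * a₁ + (1 - p) * a₂;
             p * a₁ + (1 - p) * a₂, -(p * b₁ + (1 - p) * b₂), 0] := by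
    subst hA'
    ext i j
    fin_cases i <;> fin_cases j <;>
      simp [Matrix.add_apply, Matrix.smul_apply] <;> ring
  have hab : p * a₁ + (1 - p) * a₂ > p * b₁ + (1 - p) * b₂ := by nlinarith
  refine ⟨heq, hab, ?_⟩
  intro x hx hsum hne
  have hsum3 : x 0 + x 1 + x 2 = 1 := by simpa [Fin.sum_univ_three] using hsum
  have hne' : ¬ (x 0 = 1/3 ∧ x 1 = 1/3 ∧ x 2 = 1/3) := by
    intro ⟨e0, e1, e2⟩
    apply hne
    funext i
    fin_cases i <;> assumption
  have hsq : (x 0 - 1/3)^2 + (x 1 - 1/3)^2 + (x 2 - 1/3)^2 > 0 := by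
    rcases lt_or_eq_of_le (by positivity : (0:ℝ) ≤ (x 0 - 1/3)^2 + (x 1 - 1/3)^2 + (x 2 - 1/3)^2) with h | h
    · exact h
    · exact absurd ⟨by nlinarith [sq_nonneg (x 0 - 1/3), sq_nonneg (x 1 - 1/3), sq_nonneg (x 2 - 1/3)],
        by nlinarith [sq_nonneg (x 0 - 1/3), sq_nonneg (x 1 - 1/3), sq_nonneg (x 2 - 1/3)],
        by nlinarith [sq_nonneg (x 0 - 1/3), sq_nonneg (x 1 - 1/3), sq_nonneg (x 2 - 1/3)]⟩ hne'
  rw [heq]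
  exact rsp_ess_aux _ _ hab x hsum3 hsq
end

section
/- Let A and B be 2×2 real matrices with entries aᵢⱼ and bᵢⱼ satisfying a₁₁ > a₂₁, a₁₂ > a₂₂, b₂₁ > b₁₁ and b₂₂ > b₁₂, let p ∈ (0,1), and let C = (1−p)·A + p·B with entries cᵢⱼ. Then: (i) C is a Coordination game (c₁₁ > c₂₁ and c₂₂ > c₁₂) if and only if (a₁₂ − a₂₂)/(b₂₂ − b₁₂) < p/(1−p) < (a₁₁ − a₂₁)/(b₂₁ − b₁₁); (ii) C is a Hawk-Dove game (c₁₁ < c₂₁ and c₂₂ < c₁₂) if and only if (a₁₁ − a₂₁)/(b₂₁ − b₁₁) < p/(1−p) < (a₁₂ − a₂₂)/(b₂₂ − b₁₂). -/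
/-- With strategy 1 strictly Nash in `A`, strategy 2 strictly Nash
in `B`, `p ∈ (0,1)`, and `C = (1−p)·A + p·B`:
(i) `C` is a Coordination game (`c₁₁ > c₂₁` and `c₂₂ > c₁₂`) iff
    `(a₁₂−a₂₂)/(b₂₂−b₁₂) < p/(1−p) < (a₁₁−a₂₁)/(b₂₁−b₁₁)`;
(ii) `C` is Hawk-Dove (`c₁₁ < c₂₁` and `c₂₂ < c₁₂`) iff
    `(a₁₁−a₂₁)/(b₂₁−b₁₁) < p/(1−p) < (a₁₂−a₂₂)/(b₂₂−b₁₂)`. -/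
theorem stmt_10 (A B : Matrix (Fin 2) (Fin 2) ℝ)
    (hA1 : A 0 0 > A 1 0) (hA2 : A 0 1 > A 1 1)
    (hB1 : B 1 0 > B 0 0) (hB2 : B 1 1 > B 0 1)
    (p : ℝ) (hp : p ∈ Set.Ioo (0:ℝ) 1)
    (C : Matrix (Fin 2) (Fin 2) ℝ) (hC : C = (1 - p) • A + p • B) :
    ((C 0 0 > C 1 0 ∧ C 1 1 > C 0 1) ↔
      ((A 0 1 - A 1 1) / (B 1 1 - B 0 1) < p / (1 - p) ∧
        p / (1 - p) < (A 0 0 - A 1 0) / (B 1 0 - B 0 0))) ∧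
    ((C 0 0 < C 1 0 ∧ C 1 1 < C 0 1) ↔
      ((A 0 0 - A 1 0) / (B 1 0 - B 0 0) < p / (1 - p) ∧
        p / (1 - p) < (A 0 1 - A 1 1) / (B 1 1 - B 0 1))) := by
  obtain ⟨hp0, hp1⟩ := hp
  have hq : (0:ℝ) < 1 - p := by linarith
  have hb1 : (0:ℝ) < B 1 0 - B 0 0 := by linarith
  have hb2 : (0:ℝ) < B 1 1 - B 0 1 := by linarith
  have e1 : C 0 0 - C 1 0 = (1 - p) * (A 0 0 - A 1 0) - p * (B 1 0 - B 0 0) := by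
    simp [hC, Matrix.add_apply, Matrix.smul_apply]; ring
  have e2 : C 1 1 - C 0 1 = p * (B 1 1 - B 0 1) - (1 - p) * (A 0 1 - A 1 1) := by
    simp [hC, Matrix.add_apply, Matrix.smul_apply]; ring
  have h1 : C 0 0 > C 1 0 ↔ p / (1 - p) < (A 0 0 - A 1 0) / (B 1 0 - B 0 0) := by
    rw [div_lt_div_iff₀ hq hb1]
    constructor
    · intro h; nlinarith [e1]
    · intro h; nlinarith [e1]
  have h2 : C 1 1 > C 0 1 ↔ (A 0 1 - A 1 1) / (B 1 1 - B 0 1) < p / (1 - p) := by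
    rw [div_lt_div_iff₀ hb2 hq]
    constructor
    · intro h; nlinarith [e2]
    · intro h; nlinarith [e2]
  have h3 : C 0 0 < C 1 0 ↔ (A 0 0 - A 1 0) / (B 1 0 - B 0 0) < p / (1 - p) := by
    rw [div_lt_div_iff₀ hb1 hq]
    constructor
    · intro h; nlinarith [e1]
    · intro h; nlinarith [e1]
  have h4 : C 1 1 < C 0 1 ↔ p / (1 - p) < (A 0 1 - A 1 1) / (B 1 1 - B 0 1) := by
    rw [div_lt_div_iff₀ hq hb2]
    constructor
    · intro h; nlinarith [e2]
    · intro h; nlinarith [e2]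
  exact ⟨by rw [h1, h2]; tauto, by rw [h3, h4]⟩
end

section
/- Let x̂ ∈ ℝⁿ with x̂ᵢ ≥ 0 and Σᵢ x̂ᵢ = 1, let φ be an incentive function, and let x : ℝ → ℝⁿ be differentiable with x(t) in the interior of the simplex for all t and satisfying the incentive dynamic ẋᵢ(t) = φᵢ(x(t)) − xᵢ(t)·Σⱼφⱼ(x(t)). If at time t₀ the ISS inequality Σᵢ x̂ᵢ·φᵢ(x(t₀))/xᵢ(t₀) > Σᵢ φᵢ(x(t₀)) holds, then the Kullback–Leibler divergence V(t) = Σᵢ x̂ᵢ·(log x̂ᵢ − log xᵢ(t)) (with the convention 0·log 0 = 0) has strictly negative derivative at t₀: V′(t₀) = −(Σᵢ x̂ᵢ·φᵢ(x(t₀))/xᵢ(t₀) − Σᵢ φᵢ(x(t₀))) < 0. Hence the KL-divergence D_KL(x̂‖x) is a local Lyapunov function at any ISS of an incentive dynamic. -/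
/-! The derivative of `V` is `-Σᵢ x̂ᵢ ẋᵢ / xᵢ`; because the weights `x̂ᵢ` sum to one, the
normalisation term `xᵢ Σⱼ φⱼ` of the dynamic contributes exactly `Σⱼ φⱼ`, leaving the
negated ISS gap. -/

open Finset

variable {ι : Type*} [Fintype ι]

theorem hasDerivAt_sum_mul_log_sub_log (a c : ι → ℝ) {x : ℝ → ι → ℝ} {x' : ι → ℝ} {t : ℝ}
    (hx : ∀ i, HasDerivAt (fun s => x s i) (x' i) t) (hx₀ : ∀ i, x t i ≠ 0) :
    HasDerivAt (fun s => ∑ i, a i * (Real.log (c i) - Real.log (x s i)))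
      (-∑ i, a i * x' i / x t i) t := by
  have hterm : ∀ i ∈ univ, HasDerivAt (fun s => a i * (Real.log (c i) - Real.log (x s i)))
      (-(a i * x' i / x t i)) t := fun i _ => by
    refine (((hasDerivAt_const t (Real.log (c i))).sub ((hx i).log (hx₀ i))).const_mul
      (a i)).congr_deriv ?_
    ring
  simpa only [sum_neg_distrib] using HasDerivAt.fun_sum hterm

theorem sum_mul_incentive_div_eq (a y p : ι → ℝ) (ha : ∑ i, a i = 1) (hy : ∀ i, y i ≠ 0) :
    ∑ i, a i * (p i - y i * ∑ j, p j) / y i = ∑ i, a i * p i / y i - ∑ i, p i := by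
  have hterm : ∀ i ∈ univ, a i * (p i - y i * ∑ j, p j) / y i
      = a i * p i / y i - a i * ∑ j, p j := fun i _ => by
    field_simp [hy i]
  rw [sum_congr rfl hterm, sum_sub_distrib, ← sum_mul, ha, one_mul]

theorem stmt_17_general (n : ℕ) (xhat : Fin n → ℝ)
    (hhat_sum : (∑ i, xhat i) = 1)
    (φ : (Fin n → ℝ) → (Fin n → ℝ))
    (x : ℝ → Fin n → ℝ)
    (hint : ∀ t : ℝ, (∀ i, 0 < x t i) ∧ (∑ i, x t i) = 1)
    (hode : ∀ t : ℝ, ∀ i, HasDerivAt (fun s => x s i)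
      (φ (x t) i - x t i * ∑ j, φ (x t) j) t)
    (t₀ : ℝ)
    (hISS : (∑ i, xhat i * φ (x t₀) i / x t₀ i) > ∑ i, φ (x t₀) i) :
    HasDerivAt (fun t => ∑ i, xhat i * (Real.log (xhat i) - Real.log (x t i)))
      (-((∑ i, xhat i * φ (x t₀) i / x t₀ i) - ∑ i, φ (x t₀) i)) t₀ ∧
    -((∑ i, xhat i * φ (x t₀) i / x t₀ i) - ∑ i, φ (x t₀) i) < 0 := by
  have hx₀ : ∀ i, x t₀ i ≠ 0 := fun i => ((hint t₀).1 i).ne'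
  refine ⟨?_, by linarith⟩
  rw [← sum_mul_incentive_div_eq xhat (x t₀) (φ (x t₀)) hhat_sum hx₀]
  exact hasDerivAt_sum_mul_log_sub_log xhat xhat (hode t₀) hx₀

/-- Along an interior solution of the incentive dynamic
`ẋᵢ = φᵢ(x) − xᵢ·Σⱼφⱼ(x)`, if the ISS inequality holds at time `t₀`, then the
KL-divergence `V(t) = Σᵢ x̂ᵢ(log x̂ᵢ − log xᵢ(t))` has derivative
`−(Σᵢ x̂ᵢφᵢ(x(t₀))/xᵢ(t₀) − Σᵢφᵢ(x(t₀)))` at `t₀`, which is strictly negative. -/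
theorem stmt_17 (n : ℕ) (xhat : Fin n → ℝ)
    (hhat_nonneg : ∀ i, 0 ≤ xhat i) (hhat_sum : (∑ i, xhat i) = 1)
    (φ : (Fin n → ℝ) → (Fin n → ℝ))
    (x : ℝ → Fin n → ℝ)
    (hint : ∀ t : ℝ, (∀ i, 0 < x t i) ∧ (∑ i, x t i) = 1)
    (hode : ∀ t : ℝ, ∀ i, HasDerivAt (fun s => x s i)
      (φ (x t) i - x t i * ∑ j, φ (x t) j) t)
    (t₀ : ℝ)
    (hISS : (∑ i, xhat i * φ (x t₀) i / x t₀ i) > ∑ i, φ (x t₀) i) :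
    HasDerivAt (fun t => ∑ i, xhat i * (Real.log (xhat i) - Real.log (x t i)))
      (-((∑ i, xhat i * φ (x t₀) i / x t₀ i) - ∑ i, φ (x t₀) i)) t₀ ∧
    -((∑ i, xhat i * φ (x t₀) i / x t₀ i) - ∑ i, φ (x t₀) i) < 0 :=
  stmt_17_general n xhat hhat_sum φ x hint hode t₀ hISS
end
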